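/- Let G be a finite simple graph with vertex set V = {1,…,n}, edge set E, and stability number α(G), and let r ≥ 1. Then the minimum, over all Nullstellensatz certificates 1 = A·(−(α(G)+r) + Σ_{i=1}^n x_i) + Σ_{i∈V} Q_i·(x_i² − x_i) + Σ_{{i,j}∈E} Q_{ij}·x_i·x_j for the non-existence of a stable set of size α(G)+r, of the certificate degree max{deg A, deg Q_i, deg Q_{ij}} equals exactly α(G): a certificate of degree α(G) exists, and no certificate of degree less than α(G) exists. -/

import Mathlib

/-!
Evaluating a certificate at the characteristic vector `χ_T` of a stable set `T` kills every
term except the first, so `A(χ_T) = 1 / (|T| - β)` with `β = α(G) + r` is forced. For a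
maximum stable set `M`, the alternating sum `∑_{T ⊆ M} (-1)^|T| A(χ_T)` only sees the
monomials of `A` whose support is exactly `M`: it vanishes when `deg A < α(G)`, while for the
explicit certificate `A* = ∑_{S stable} c_|S| x^S` it is `± c_α ≠ 0`. As all certificates take
the same values at the `χ_T`, every `A` has degree at least `α(G)`.

`A*` is a certificate of degree `α(G)`: modulo the multiples of `x_i² - x_i` and of the edge
monomials `x_i x_j` by cofactors of degree at most `α(G)`, `x^S ∑ x_i` is congruent to
`|S| x^S + ∑ x^(S ∪ {i})` over the stable one-point extensions of `S`, and
`c_k = -k! / ∏_{j ≤ k} (β - j)` solves the resulting recurrence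
`(k - β) c_k + k c_(k-1) = [k = 0]`.
-/

open Finset MvPolynomial

/-- The edge set of `G`, as ordered pairs `(i, j)` with `i < j`. -/
def edgePairs {n : ℕ} (G : SimpleGraph (Fin n)) [DecidableRel G.Adj] :
    Finset (Fin n × Fin n) :=
  Finset.univ.filter fun p => p.1 < p.2 ∧ G.Adj p.1 p.2

/-- A finset of vertices is stable (independent) if no two of its members are adjacent. -/
def IsStableSet {n : ℕ} (G : SimpleGraph (Fin n)) (S : Finset (Fin n)) : Prop :=
  ∀ i ∈ S, ∀ j ∈ S, ¬ G.Adj i j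

/-- The stability number `α(G)`: the maximum size of a stable set of `G`. -/
def stabilityNumber {n : ℕ} (G : SimpleGraph (Fin n)) [DecidableRel G.Adj] : ℕ :=
  (Finset.univ.powerset.filter fun S => ∀ i ∈ S, ∀ j ∈ S, ¬ G.Adj i j).sup Finset.card

/-- The Nullstellensatz certificate identity
`1 = A(−(α(G)+r) + Σ x_i) + Σ_i Q_i (x_i² − x_i) + Σ_{{i,j}∈E} Q_{ij} x_i x_j`
for the non-existence of a stable set of size `α(G) + r`. -/
def IsStableCert {n : ℕ} (G : SimpleGraph (Fin n)) [DecidableRel G.Adj] (r : ℕ)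
    (A : MvPolynomial (Fin n) ℂ) (Q : Fin n → MvPolynomial (Fin n) ℂ)
    (Qe : Fin n × Fin n → MvPolynomial (Fin n) ℂ) : Prop :=
  (1 : MvPolynomial (Fin n) ℂ) =
    A * ((∑ i : Fin n, X i) - C ((stabilityNumber G + r : ℕ) : ℂ)) +
    (∑ i : Fin n, Q i * (X i ^ 2 - X i)) +
    ∑ p ∈ edgePairs G, Qe p * (X p.1 * X p.2)

/-- The degree of a certificate: `max{deg A, deg Q_i, deg Q_{ij}}` (total degrees). -/
def stableCertDeg {n : ℕ} (G : SimpleGraph (Fin n)) [DecidableRel G.Adj]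
    (A : MvPolynomial (Fin n) ℂ) (Q : Fin n → MvPolynomial (Fin n) ℂ)
    (Qe : Fin n × Fin n → MvPolynomial (Fin n) ℂ) : ℕ :=
  max A.totalDegree
    (max (Finset.univ.sup fun i => (Q i).totalDegree)
      ((edgePairs G).sup fun p => (Qe p).totalDegree))

/-- A certificate is reduced when every monomial of `A` is square-free and its support
is a stable set of `G`. -/
def IsReducedCoeff {n : ℕ} (G : SimpleGraph (Fin n)) (A : MvPolynomial (Fin n) ℂ) : Prop :=
  ∀ m ∈ A.support, (∀ i : Fin n, m i ≤ 1) ∧ IsStableSet G m.support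

/-- The square-free exponent vector `∏_{v ∈ S} x_v` associated with a finset `S`. -/
noncomputable def expOf {n : ℕ} (S : Finset (Fin n)) : Fin n →₀ ℕ :=
  ∑ v ∈ S, Finsupp.single v 1

section AltSum

variable {σ R : Type*} [DecidableEq σ] [CommRing R]

theorem Finset.sum_Icc_neg_one_pow_card {F M : Finset σ} (h : F ⊆ M) :
    ∑ T ∈ Icc F M, (-1 : R) ^ #T = if F = M then (-1) ^ #M else 0 := by
  rw [Icc_eq_image_powerset h, sum_image]
  · have hcard : ∀ U ∈ (M \ F).powerset, #(F ∪ U) = #F + #U := fun U hU =>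
      card_union_of_disjoint (disjoint_sdiff.mono_right (mem_powerset.1 hU))
    rw [sum_congr rfl fun U hU => by rw [hcard U hU, pow_add], ← mul_sum]
    have := congrArg (Int.cast : ℤ → R) (sum_powerset_neg_one_pow_card (x := M \ F))
    push_cast at this
    rw [this]
    by_cases hMF : M ⊆ F
    · obtain rfl := h.antisymm hMF
      simp
    · rw [if_neg (mt sdiff_eq_empty_iff_subset.1 hMF), if_neg fun e : F = M => hMF (e ▸ subset_rfl),
        mul_zero]
  · intro U hU V hV hUV
    have hU' := disjoint_sdiff.mono_right (mem_powerset.1 hU)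
    have hV' := disjoint_sdiff.mono_right (mem_powerset.1 hV)
    have := congrArg (· \ F) hUV
    simpa [union_sdiff_left, sdiff_eq_self_of_disjoint hU'.symm,
      sdiff_eq_self_of_disjoint hV'.symm] using this

variable (R) in
def charVec (T : Finset σ) : σ → R := fun i => if i ∈ T then 1 else 0

theorem eval_charVec_monomial (T : Finset σ) (d : σ →₀ ℕ) (c : R) :
    eval (charVec R T) (monomial d c) = if d.support ⊆ T then c else 0 := by
  rw [eval_monomial, Finsupp.prod]
  have : ∀ i ∈ d.support, charVec R T i ^ d i = if i ∈ T then 1 else 0 := fun i hi => by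
    simp [charVec, ite_pow, zero_pow (Finsupp.mem_support_iff.1 hi)]
  rw [prod_congr rfl this, prod_boole, mul_ite, mul_one, mul_zero]
  rfl

theorem eval_charVec_prod_X (T S : Finset σ) :
    eval (charVec R T) (∏ v ∈ S, X v) = if S ⊆ T then 1 else 0 := by
  simp only [map_prod, eval_X, charVec, prod_boole, subset_iff]

noncomputable def altSum (M : Finset σ) : MvPolynomial σ R →ₗ[R] R :=
  ∑ T ∈ M.powerset, (-1 : R) ^ #T • (aeval (charVec R T)).toLinearMap

theorem altSum_apply (M : Finset σ) (p : MvPolynomial σ R) :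
    altSum M p = ∑ T ∈ M.powerset, (-1) ^ #T * eval (charVec R T) p := by
  simp [altSum]

theorem altSum_of_eval_charVec {M F : Finset σ} {p : MvPolynomial σ R} {c : R}
    (hp : ∀ T, eval (charVec R T) p = if F ⊆ T then c else 0) :
    altSum M p = if F = M then (-1) ^ #M * c else 0 := by
  simp_rw [altSum_apply, hp, mul_ite, mul_zero, ← sum_filter, ← sum_mul]
  by_cases hFM : F ⊆ M
  · rw [← Icc_eq_filter_powerset, sum_Icc_neg_one_pow_card hFM, ite_mul, zero_mul]
  · rw [← Icc_eq_filter_powerset, Icc_eq_empty hFM, sum_empty, zero_mul,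
      if_neg fun e => hFM e.le]

theorem altSum_prod_X (M S : Finset σ) :
    altSum M (∏ v ∈ S, (X v : MvPolynomial σ R)) = if S = M then (-1) ^ #M else 0 := by
  rw [altSum_of_eval_charVec (eval_charVec_prod_X · S), mul_one]

theorem altSum_eq_zero_of_totalDegree_lt {M : Finset σ} {p : MvPolynomial σ R}
    (hp : p.totalDegree < #M) : altSum M p = 0 := by
  rw [p.as_sum, map_sum]
  refine sum_eq_zero fun d hd => ?_
  rw [altSum_of_eval_charVec (eval_charVec_monomial · d _), if_neg]
  rintro rfl
  have : #d.support ≤ d.sum fun _ e => e := by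
    simpa [Finsupp.sum] using card_nsmul_le_sum d.support d 1 fun i hi =>
      Nat.one_le_iff_ne_zero.2 (Finsupp.mem_support_iff.1 hi)
  exact (le_totalDegree hd).not_gt (this.trans_lt' hp)

end AltSum

theorem Finset.sum_sum_insert_eq_sum_card_nsmul {α M : Type*} [DecidableEq α] [Fintype α]
    [AddCommMonoid M] {𝒮 : Finset (Finset α)} (h𝒮 : IsLowerSet (𝒮 : Set (Finset α)))
    (g : Finset α → M) :
    ∑ S ∈ 𝒮, ∑ i ∈ univ with i ∉ S ∧ insert i S ∈ 𝒮, g (insert i S) = ∑ S ∈ 𝒮, #S • g S := by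
  simp_rw [← sum_const]
  rw [sum_comm' (t' := univ) (s' := fun i => {S ∈ 𝒮 | i ∉ S ∧ insert i S ∈ 𝒮}) (by simp),
    sum_comm' (t' := univ) (s' := fun i => {S ∈ 𝒮 | i ∈ S}) (by simp)]
  refine sum_congr rfl fun i _ => sum_nbij' (insert i) (·.erase i) ?_ ?_ ?_ ?_ fun _ _ => rfl
  · intro S hS
    simp only [mem_filter] at hS ⊢
    exact ⟨hS.2.2, mem_insert_self i S⟩
  · intro S hS
    simp only [mem_filter] at hS ⊢
    refine ⟨h𝒮 (erase_subset i S) hS.1, notMem_erase i S, ?_⟩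
    rw [insert_erase hS.2]; exact hS.1
  · intro S hS
    simp only [mem_filter] at hS
    exact erase_insert hS.2.1
  · intro S hS
    simp only [mem_filter] at hS
    exact insert_erase hS.2

section DegreeSpan

variable {σ ι R : Type*} [CommSemiring R]

/-- The combinations `∑ i ∈ s, Q i * g i` with `(Q i).totalDegree ≤ d` for every `i`. -/
noncomputable def degreeSpan (d : ℕ) (s : Finset ι) (g : ι → MvPolynomial σ R) :
    Submodule R (MvPolynomial σ R) :=
  ⨆ i ∈ s, (restrictTotalDegree σ R d).map (LinearMap.mulRight R (g i))

theorem mul_mem_degreeSpan {d : ℕ} {s : Finset ι} {g : ι → MvPolynomial σ R} {i : ι}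
    (hi : i ∈ s) {m : MvPolynomial σ R} (hm : m.totalDegree ≤ d) :
    m * g i ∈ degreeSpan d s g :=
  Submodule.mem_iSup_of_mem i <| Submodule.mem_iSup_of_mem hi <|
    Submodule.mem_map_of_mem ((mem_restrictTotalDegree σ d m).2 hm)

theorem exists_sum_of_mem_degreeSpan {d : ℕ} {s : Finset ι} {g : ι → MvPolynomial σ R}
    {f : MvPolynomial σ R} (hf : f ∈ degreeSpan d s g) :
    ∃ Q : ι → MvPolynomial σ R, (∀ i, (Q i).totalDegree ≤ d) ∧ f = ∑ i ∈ s, Q i * g i := by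
  obtain ⟨μ, rfl⟩ := (Submodule.mem_iSup_finset_iff_exists_sum _ f).1 hf
  choose Q hQ hQμ using fun i => Submodule.mem_map.1 (μ i).2
  exact ⟨Q, fun i => (mem_restrictTotalDegree σ d _).1 (hQ i),
    sum_congr rfl fun i _ => (hQμ i).symm⟩

end DegreeSpan

section CertCoeff

variable {K : Type*} [Field K]

noncomputable def certCoeff (β : K) (k : ℕ) : K :=
  -(k.factorial : K) / ∏ j ∈ range (k + 1), (β - j)

theorem prod_range_sub_ne_zero {β : K} {k : ℕ} (hβ : ∀ j ≤ k, β ≠ j) :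
    ∏ j ∈ range (k + 1), (β - j) ≠ 0 :=
  prod_ne_zero_iff.2 fun j hj => sub_ne_zero.2 (hβ j (Nat.lt_succ_iff.1 (mem_range.1 hj)))

theorem certCoeff_ne_zero {β : K} {k : ℕ} [CharZero K] (hβ : ∀ j ≤ k, β ≠ j) :
    certCoeff β k ≠ 0 :=
  div_ne_zero (neg_ne_zero.2 (Nat.cast_ne_zero.2 k.factorial_ne_zero))
    (prod_range_sub_ne_zero hβ)

theorem sub_mul_certCoeff_add {β : K} {k : ℕ} (hβ : ∀ j ≤ k, β ≠ j) :
    (k - β) * certCoeff β k + k * certCoeff β (k - 1) = if k = 0 then 1 else 0 := by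
  rcases k with _ | k
  · have : β ≠ 0 := by simpa using hβ 0 le_rfl
    simp only [certCoeff]
    field_simp
    simp [this]
  · have hP' := prod_range_sub_ne_zero fun j hj => hβ j (Nat.le_succ_of_le hj)
    have hk : β - (k + 1 : ℕ) ≠ 0 := sub_ne_zero.2 (hβ _ le_rfl)
    simp only [certCoeff, prod_range_succ _ (k + 1), Nat.factorial_succ, Nat.add_sub_cancel]
    generalize ∏ j ∈ range (k + 1), (β - j) = P at hP' ⊢
    field_simp
    push_cast
    ring

end CertCoeff

section StableSets

variable {n : ℕ} {G : SimpleGraph (Fin n)}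

theorem IsStableSet.mono {S T : Finset (Fin n)} (hS : IsStableSet G S) (hTS : T ⊆ S) :
    IsStableSet G T :=
  fun i hi j hj => hS i (hTS hi) j (hTS hj)

theorem exists_adj_of_not_isStableSet_insert {S : Finset (Fin n)} {i : Fin n}
    (hS : IsStableSet G S) (hiS : ¬ IsStableSet G (insert i S)) : ∃ j ∈ S, G.Adj i j := by
  by_contra! h
  refine hiS fun a ha b hb hab => ?_
  rcases mem_insert.1 ha with rfl | ha <;> rcases mem_insert.1 hb with hb | hb
  · exact G.irrefl (hb ▸ hab)
  · exact h b hb hab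
  · exact h a ha (hb ▸ hab.symm)
  · exact hS a ha b hb hab

variable [DecidableRel G.Adj]

variable (G) in
def stableSets : Finset (Finset (Fin n)) :=
  {S ∈ univ.powerset | ∀ i ∈ S, ∀ j ∈ S, ¬ G.Adj i j}

theorem mem_stableSets {S : Finset (Fin n)} : S ∈ stableSets G ↔ IsStableSet G S := by
  simp [stableSets, IsStableSet]

theorem empty_mem_stableSets : ∅ ∈ stableSets G :=
  mem_stableSets.2 fun _ h => absurd h (notMem_empty _)

theorem isLowerSet_stableSets : IsLowerSet (stableSets G : Set (Finset (Fin n))) :=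
  fun _ _ hTS hS => mem_stableSets.2 ((mem_stableSets.1 hS).mono hTS)

theorem IsStableSet.card_le {S : Finset (Fin n)} (hS : IsStableSet G S) :
    #S ≤ stabilityNumber G :=
  le_sup (f := card) (mem_stableSets.2 hS)

variable (G) in
theorem exists_isStableSet_card_eq : ∃ M, IsStableSet G M ∧ #M = stabilityNumber G := by
  obtain ⟨M, hM, h⟩ := exists_mem_eq_sup (stableSets G) ⟨∅, empty_mem_stableSets⟩ card
  exact ⟨M, mem_stableSets.1 hM, h.symm⟩

end StableSets

section Certificate

variable {n : ℕ} (G : SimpleGraph (Fin n)) [DecidableRel G.Adj]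

noncomputable def certSpan (d : ℕ) : Submodule ℂ (MvPolynomial (Fin n) ℂ) :=
  degreeSpan d univ (fun i => X i ^ 2 - X i) ⊔
    degreeSpan d (edgePairs G) (fun p => X p.1 * X p.2)

variable {G}

theorem mul_X_sq_sub_X_mem_certSpan {d : ℕ} {m : MvPolynomial (Fin n) ℂ}
    (hm : m.totalDegree ≤ d) (i : Fin n) : m * (X i ^ 2 - X i) ∈ certSpan G d :=
  Submodule.mem_sup_left (mul_mem_degreeSpan (mem_univ i) hm)

theorem mul_X_mul_X_mem_certSpan {d : ℕ} {m : MvPolynomial (Fin n) ℂ}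
    (hm : m.totalDegree ≤ d) {i j : Fin n} (hij : G.Adj i j) :
    m * (X i * X j) ∈ certSpan G d := by
  have key : ∀ {a b : Fin n}, a < b → G.Adj a b → m * (X a * X b) ∈ certSpan G d :=
    fun {a b} hab hadj => Submodule.mem_sup_right <|
      mul_mem_degreeSpan (g := fun p : Fin n × Fin n => X p.1 * X p.2) (i := (a, b))
        (mem_filter.2 ⟨mem_univ _, hab, hadj⟩) hm
  rcases lt_or_gt_of_ne (G.ne_of_adj hij) with h | h
  · exact key h hij
  · rw [mul_comm (X i)]
    exact key h hij.symm

theorem exists_eq_of_mem_certSpan {d : ℕ} {f : MvPolynomial (Fin n) ℂ}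
    (hf : f ∈ certSpan G d) :
    ∃ (Q : Fin n → MvPolynomial (Fin n) ℂ) (Qe : Fin n × Fin n → MvPolynomial (Fin n) ℂ),
      (∀ i, (Q i).totalDegree ≤ d) ∧ (∀ p, (Qe p).totalDegree ≤ d) ∧
      f = ∑ i, Q i * (X i ^ 2 - X i) + ∑ p ∈ edgePairs G, Qe p * (X p.1 * X p.2) := by
  obtain ⟨f₁, hf₁, f₂, hf₂, rfl⟩ := Submodule.mem_sup.1 hf
  obtain ⟨Q, hQ, rfl⟩ := exists_sum_of_mem_degreeSpan hf₁
  obtain ⟨Qe, hQe, rfl⟩ := exists_sum_of_mem_degreeSpan hf₂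
  exact ⟨Q, Qe, hQ, hQe, rfl⟩

theorem totalDegree_prod_X_le (S : Finset (Fin n)) :
    (∏ v ∈ S, (X v : MvPolynomial (Fin n) ℂ)).totalDegree ≤ #S :=
  (totalDegree_finsetProd _ _).trans (by simp)

theorem prod_X_mul_X_sModEq {d : ℕ} {S : Finset (Fin n)} (hS : IsStableSet G S)
    (hSd : #S ≤ d + 1) (i : Fin n) :
    (∏ v ∈ S, X v) * X i ≡
      (if i ∈ S then ∏ v ∈ S, X v
        else if insert i S ∈ stableSets G then ∏ v ∈ insert i S, X v else 0)
      [SMOD certSpan G d] := by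
  have herase : ∀ j ∈ S, (∏ v ∈ S.erase j, (X v : MvPolynomial (Fin n) ℂ)).totalDegree ≤ d :=
    fun j hj => (totalDegree_prod_X_le _).trans (by rw [card_erase_of_mem hj]; omega)
  split_ifs with hiS hins
  · refine SModEq.sub_mem.2 ?_
    convert mul_X_sq_sub_X_mem_certSpan (herase i hiS) i using 1
    rw [← mul_prod_erase S _ hiS]
    ring
  · rw [prod_insert hiS, mul_comm]
  · obtain ⟨j, hj, hij⟩ := exists_adj_of_not_isStableSet_insert hS (mt mem_stableSets.2 hins)
    refine SModEq.zero.2 ?_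
    convert mul_X_mul_X_mem_certSpan (herase j hj) hij using 1
    rw [← mul_prod_erase S _ hj]
    ring

variable (G) in
noncomputable def stableCertA (r : ℕ) : MvPolynomial (Fin n) ℂ :=
  ∑ S ∈ stableSets G,
    certCoeff ((stabilityNumber G + r : ℕ) : ℂ) #S • ∏ v ∈ S, X v

theorem totalDegree_stableCertA_le (r : ℕ) :
    (stableCertA G r).totalDegree ≤ stabilityNumber G :=
  totalDegree_finsetSum_le fun S hS => (totalDegree_smul_le _ _).trans <|
    (totalDegree_prod_X_le S).trans (mem_stableSets.1 hS).card_le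

theorem stableCertA_mul_sModEq {r : ℕ} (hr : 1 ≤ r) :
    stableCertA G r * (∑ i, X i - C ((stabilityNumber G + r : ℕ) : ℂ)) ≡ 1
      [SMOD certSpan G (stabilityNumber G)] := by
  have hβ : ∀ S ∈ stableSets G, ∀ j ≤ #S, ((stabilityNumber G + r : ℕ) : ℂ) ≠ j :=
    fun S hS j hj => Nat.cast_injective.ne (by have := (mem_stableSets.1 hS).card_le; omega)
  set β : ℂ := ((stabilityNumber G + r : ℕ) : ℂ)
  set c := certCoeff β
  set x : Finset (Fin n) → MvPolynomial (Fin n) ℂ := fun S => ∏ v ∈ S, X v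
  have hsum : ∀ S ∈ stableSets G, x S * ∑ i, X i ≡
      #S • x S + ∑ i ∈ univ with i ∉ S ∧ insert i S ∈ stableSets G, x (insert i S)
      [SMOD certSpan G (stabilityNumber G)] := fun S hS => by
    rw [mul_sum]
    refine (SModEq.sum fun i _ => prod_X_mul_X_sModEq (mem_stableSets.1 hS)
      (((mem_stableSets.1 hS).card_le).trans (Nat.le_succ _)) i).trans ?_
    rw [sum_ite, sum_ite, sum_const_zero, add_zero, filter_filter, filter_mem_eq_inter,
      univ_inter, sum_const]
  have hshift : ∑ S ∈ stableSets G, c #S •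
        ∑ i ∈ univ with i ∉ S ∧ insert i S ∈ stableSets G, x (insert i S) =
      ∑ S ∈ stableSets G, #S • c (#S - 1) • x S := by
    rw [← sum_sum_insert_eq_sum_card_nsmul isLowerSet_stableSets]
    refine sum_congr rfl fun S _ => ?_
    rw [smul_sum]
    refine sum_congr rfl fun i hi => ?_
    rw [card_insert_of_notMem (mem_filter.1 hi).2.1, Nat.add_sub_cancel]
  have hterm : ∀ S ∈ stableSets G, (c #S • x S) * (∑ i, X i - C β) ≡
      c #S • (#S • x S + ∑ i ∈ univ with i ∉ S ∧ insert i S ∈ stableSets G, x (insert i S)) -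
        (c #S * β) • x S [SMOD certSpan G (stabilityNumber G)] := fun S hS => by
    rw [smul_mul_assoc, mul_sub, smul_sub, mul_comm (x S) (C β), C_mul', smul_smul]
    exact ((hsum S hS).smul _).sub SModEq.rfl
  calc stableCertA G r * (∑ i, X i - C β)
      ≡ ∑ S ∈ stableSets G, (c #S • (#S • x S +
          ∑ i ∈ univ with i ∉ S ∧ insert i S ∈ stableSets G, x (insert i S)) - (c #S * β) • x S)
          [SMOD certSpan G (stabilityNumber G)] := by
        rw [stableCertA, sum_mul]
        exact SModEq.sum hterm
    _ = ∑ S ∈ stableSets G, ((#S - β) * c #S + #S * c (#S - 1)) • x S := by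
        simp only [smul_add, sum_sub_distrib, sum_add_distrib, hshift]
        rw [← sum_add_distrib, ← sum_sub_distrib]
        refine sum_congr rfl fun S _ => ?_
        module
    _ = 1 := by
        rw [sum_congr rfl fun S hS => by rw [sub_mul_certCoeff_add (hβ S hS)]]
        simp only [ite_smul, one_smul, zero_smul, card_eq_zero]
        rw [sum_ite_eq' _ _ _, if_pos empty_mem_stableSets]
        exact prod_empty

variable (G) in
theorem exists_isStableCert_stableCertA {r : ℕ} (hr : 1 ≤ r) :
    ∃ (Q : Fin n → MvPolynomial (Fin n) ℂ) (Qe : Fin n × Fin n → MvPolynomial (Fin n) ℂ),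
      IsStableCert G r (stableCertA G r) Q Qe ∧
        (∀ i, (Q i).totalDegree ≤ stabilityNumber G) ∧
        (∀ p, (Qe p).totalDegree ≤ stabilityNumber G) := by
  obtain ⟨Q, Qe, hQ, hQe, h⟩ :=
    exists_eq_of_mem_certSpan (SModEq.sub_mem.1 (stableCertA_mul_sModEq (G := G) hr).symm)
  exact ⟨Q, Qe, by rw [IsStableCert]; linear_combination h, hQ, hQe⟩

end Certificate

section LowerBound

variable {n : ℕ} {G : SimpleGraph (Fin n)} [DecidableRel G.Adj]

theorem IsStableCert.eval_charVec_mul {r : ℕ} {A : MvPolynomial (Fin n) ℂ}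
    {Q : Fin n → MvPolynomial (Fin n) ℂ} {Qe : Fin n × Fin n → MvPolynomial (Fin n) ℂ}
    (hc : IsStableCert G r A Q Qe) {T : Finset (Fin n)} (hT : IsStableSet G T) :
    eval (charVec ℂ T) A * (#T - ((stabilityNumber G + r : ℕ) : ℂ)) = 1 := by
  have hsq : ∀ i ∈ univ, eval (charVec ℂ T) (Q i * (X i ^ 2 - X i)) = 0 := fun i _ => by
    by_cases hi : i ∈ T <;> simp [charVec, hi]
  have hedge : ∀ p ∈ edgePairs G, eval (charVec ℂ T) (Qe p * (X p.1 * X p.2)) = 0 :=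
    fun p hp => by
      by_cases h1 : p.1 ∈ T
      · have h2 : p.2 ∉ T := fun h2 => hT _ h1 _ h2 (mem_filter.1 hp).2.2
        simp [charVec, h2]
      · simp [charVec, h1]
  have h := congrArg (eval (charVec ℂ T)) hc
  rw [map_add, map_add, map_sum, map_sum, sum_eq_zero hsq, sum_eq_zero hedge] at h
  simpa [charVec, sum_boole] using h.symm

theorem altSum_stableCertA {M : Finset (Fin n)} (hM : IsStableSet G M) (r : ℕ) :
    altSum M (stableCertA G r) = (-1) ^ #M * certCoeff ((stabilityNumber G + r : ℕ) : ℂ) #M := by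
  simp only [stableCertA, map_sum, map_smul, altSum_prod_X, smul_eq_mul, mul_ite, mul_zero]
  rw [sum_ite_eq' _ _ _, if_pos (mem_stableSets.2 hM), mul_comm]

theorem IsStableCert.stabilityNumber_le_totalDegree {r : ℕ} (hr : 1 ≤ r)
    {A : MvPolynomial (Fin n) ℂ} {Q : Fin n → MvPolynomial (Fin n) ℂ}
    {Qe : Fin n × Fin n → MvPolynomial (Fin n) ℂ} (hc : IsStableCert G r A Q Qe) :
    stabilityNumber G ≤ A.totalDegree := by
  obtain ⟨M, hM, hMcard⟩ := exists_isStableSet_card_eq G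
  obtain ⟨Q', Qe', hc', -⟩ := exists_isStableCert_stableCertA G hr
  have hβ : ∀ j ≤ #M, ((stabilityNumber G + r : ℕ) : ℂ) ≠ j :=
    fun j hj => Nat.cast_injective.ne (by omega)
  have hagree : altSum M A = altSum M (stableCertA G r) := by
    simp only [altSum_apply]
    refine sum_congr rfl fun T hT => congrArg _ ?_
    have hTM := mem_powerset.1 hT
    have hT' := hM.mono hTM
    refine mul_right_cancel₀ (sub_ne_zero.2 (hβ _ (card_le_card hTM)).symm) ?_
    rw [hc.eval_charVec_mul hT', hc'.eval_charVec_mul hT']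
  by_contra! hlt
  rw [altSum_eq_zero_of_totalDegree_lt (hMcard ▸ hlt), altSum_stableCertA hM] at hagree
  exact mul_ne_zero (pow_ne_zero _ (neg_ne_zero.2 one_ne_zero)) (certCoeff_ne_zero hβ)
    hagree.symm

end LowerBound

/-- The minimum degree over all Nullstellensatz certificates for the
non-existence of a stable set of size `α(G) + r` (with `r ≥ 1`) equals exactly `α(G)`:
a certificate of degree `α(G)` exists, and every certificate has degree at least `α(G)`. -/
theorem minimum_stable_certificate_degree (n : ℕ) (G : SimpleGraph (Fin n))
    [DecidableRel G.Adj] (r : ℕ) (hr : 1 ≤ r) :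
    (∃ (A : MvPolynomial (Fin n) ℂ) (Q : Fin n → MvPolynomial (Fin n) ℂ)
        (Qe : Fin n × Fin n → MvPolynomial (Fin n) ℂ),
        IsStableCert G r A Q Qe ∧ stableCertDeg G A Q Qe = stabilityNumber G) ∧
    (∀ (A : MvPolynomial (Fin n) ℂ) (Q : Fin n → MvPolynomial (Fin n) ℂ)
        (Qe : Fin n × Fin n → MvPolynomial (Fin n) ℂ),
        IsStableCert G r A Q Qe → stabilityNumber G ≤ stableCertDeg G A Q Qe) := by
  refine ⟨?_, fun A Q Qe hc => (hc.stabilityNumber_le_totalDegree hr).trans (le_max_left _ _)⟩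
  obtain ⟨Q, Qe, hc, hQ, hQe⟩ := exists_isStableCert_stableCertA G hr
  have hA : (stableCertA G r).totalDegree = stabilityNumber G :=
    (totalDegree_stableCertA_le r).antisymm (hc.stabilityNumber_le_totalDegree hr)
  refine ⟨_, Q, Qe, hc, ?_⟩
  rw [stableCertDeg, hA]
  exact max_eq_left (max_le (Finset.sup_le fun i _ => hQ i) (Finset.sup_le fun p _ => hQe p))
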